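/- Let A be a skew Boolean ∩-algebra. For all a, b, t ∈ A and every prime ideal P of A: (i) (a∧b∧a ∉ P and t θ_P (a∧b∧a)) holds if and only if (a ∉ P and b ∉ P and t θ_P a) holds; and (ii) (a∨b∨a ∉ P and t θ_P (a∨b∨a)) holds if and only if ((a ∉ P and t θ_P a) or (a ∈ P and b ∉ P and t θ_P b)) holds. -/
import Mathlib


universe u

/-- A skew Boolean ∩-algebra. -/
class SkewBooleanInterAlgebra (α : Type u) where
  meet : α → α → α
  join : α → α → α
  zero : α
  rcomp : α → α → α
  inter : α → α → α
  meet_idem : ∀ x, meet x x = x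
  meet_assoc : ∀ x y z, meet (meet x y) z = meet x (meet y z)
  join_idem : ∀ x, join x x = x
  join_assoc : ∀ x y z, join (join x y) z = join x (join y z)
  absorb₁ : ∀ x y, meet x (join x y) = x
  absorb₂ : ∀ x y, meet (join y x) x = x
  absorb₃ : ∀ x y, join x (meet x y) = x
  absorb₄ : ∀ x y, join (meet y x) x = x
  meet_distrib_left : ∀ x y z, meet x (join y z) = join (meet x y) (meet x z)
  meet_distrib_right : ∀ x y z, meet (join y z) x = join (meet y x) (meet z x)
  zero_join : ∀ x, join zero x = x
  join_zero : ∀ x, join x zero = x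
  rcomp_meet : ∀ x y, meet (rcomp x y) (meet x (meet y x)) = zero
  rcomp_join : ∀ x y, join (rcomp x y) (meet x (meet y x)) = x
  normality : ∀ x y z w, meet x (meet y (meet z w)) = meet x (meet z (meet y w))
  regularity : ∀ x y z, join x (join y (join x (join z x))) = join x (join y (join z x))
  inter_le_left : ∀ x y, meet (inter x y) x = inter x y ∧ meet x (inter x y) = inter x y
  inter_le_right : ∀ x y, meet (inter x y) y = inter x y ∧ meet y (inter x y) = inter x y
  inter_glb : ∀ x y z, (meet z x = z ∧ meet x z = z) → (meet z y = z ∧ meet y z = z) →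
    meet z (inter x y) = z ∧ meet (inter x y) z = z

namespace SkewBooleanInterAlgebra

variable {α : Type u} [SkewBooleanInterAlgebra α]

/-- The natural partial order: `x ≤ y` iff `x∧y = x = y∧x`. -/
def nle (x y : α) : Prop := meet x y = x ∧ meet y x = x

/-- The natural preorder: `x ≼ y` iff `x∧y∧x = x`. -/
def npre (x y : α) : Prop := meet x (meet y x) = x

/-- Green's relation `D`: `x D y` iff `x ≼ y` and `y ≼ x`. -/
def dGreen (x y : α) : Prop := npre x y ∧ npre y x

/-- An ideal: contains `0`, closed under `∨`, downward closed under `≼`. -/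
def IsIdeal (I : Set α) : Prop :=
  zero ∈ I ∧ (∀ x ∈ I, ∀ y ∈ I, join x y ∈ I) ∧ (∀ x y : α, y ∈ I → npre x y → x ∈ I)

/-- A prime ideal: a proper ideal such that `a∧b ∈ P` implies `a ∈ P` or `b ∈ P`. -/
def IsPrimeIdeal (P : Set α) : Prop :=
  IsIdeal P ∧ P ≠ Set.univ ∧ ∀ a b : α, meet a b ∈ P → a ∈ P ∨ b ∈ P

/-- The congruence `θ_P` associated with an ideal `P`. -/
def theta (P : Set α) (x y : α) : Prop :=
  join (rcomp x (inter x y)) (rcomp y (inter x y)) ∈ P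

end SkewBooleanInterAlgebra

open SkewBooleanInterAlgebra

section Aux

variable {α : Type u} [SkewBooleanInterAlgebra α] {P : Set α}

lemma zmeet (x : α) : meet (zero : α) x = zero := by
  have h := absorb₁ (zero : α) x
  rwa [zero_join] at h

lemma meetz (x : α) : meet x (zero : α) = zero := by
  have h := absorb₂ (zero : α) x
  rwa [join_zero] at h

lemma comm_zero {x y : α} (h : meet x y = zero) : meet y x = zero := by
  have h2 := meet_idem (meet y x)
  rw [meet_assoc, ← meet_assoc x y x, h, zmeet, meetz] at h2
  exact h2.symm

lemma sand_zero {x y : α} (h : meet (meet x y) x = zero) : meet x y = zero := by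
  have h2 := meet_idem (meet x y)
  rw [← meet_assoc (meet x y) x y, h, zmeet] at h2
  exact h2.symm

lemma norm' (x y z w : α) : meet x (meet y (meet z w)) = meet x (meet z (meet y w)) :=
  normality x y z w

lemma mal {x y : α} (h : meet x y = x) (w : α) : meet x (meet y w) = meet x w := by
  rw [← meet_assoc, h]

lemma mar {x y : α} (h : meet x y = y) (w : α) : meet x (meet y w) = meet y w := by
  rw [← meet_assoc, h]

lemma nle_trans {x y z : α} (h1 : nle x y) (h2 : nle y z) : nle x z := by
  obtain ⟨a1, a2⟩ := h1; obtain ⟨b1, b2⟩ := h2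
  constructor
  · rw [← a1, meet_assoc, b1]
  · rw [← a2, ← meet_assoc, b2]

lemma npre_of_nle {x y : α} (h : nle x y) : npre x y := by
  show meet x (meet y x) = x
  rw [h.2, meet_idem]

lemma npre_join_left (x y : α) : npre x (join x y) := by
  show meet x (meet (join x y) x) = x
  rw [← meet_assoc, absorb₁, meet_idem]

lemma npre_join_right (x y : α) : npre y (join x y) := by
  show meet y (meet (join x y) y) = y
  rw [absorb₂, meet_idem]

lemma mxyxy (x y : α) : meet x (meet y (meet x y)) = meet x y := by
  rw [norm', ← meet_assoc, meet_idem, meet_idem]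

lemma npre_sandwich (x y : α) : npre (meet x (meet y x)) y := by
  show meet (meet x (meet y x)) (meet y (meet x (meet y x))) = meet x (meet y x)
  rw [mxyxy y x, meet_assoc, meet_idem]

lemma sandwich_nle (x y : α) : nle (meet x (meet y x)) x := by
  constructor
  · rw [meet_assoc, meet_assoc, meet_idem]
  · rw [← meet_assoc, meet_idem]

lemma meet_comm_of_nle {x y j : α} (hx : nle x j) (hy : nle y j) : meet x y = meet y x := by
  calc meet x y = meet (meet j x) (meet y j) := by rw [hx.2, hy.1]
    _ = meet j (meet x (meet y j)) := by rw [meet_assoc]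
    _ = meet j (meet y (meet x j)) := norm' j x y j
    _ = meet (meet j y) (meet x j) := by rw [meet_assoc]
    _ = meet y x := by rw [hy.2, hx.1]

lemma nle_meet_left {x y j : α} (hx : nle x j) (hy : nle y j) : nle (meet x y) x := by
  have hc := meet_comm_of_nle hx hy
  constructor
  · rw [meet_assoc, ← hc, ← meet_assoc, meet_idem]
  · rw [← meet_assoc, meet_idem]

lemma nle_meet_right {x y j : α} (hx : nle x j) (hy : nle y j) : nle (meet x y) y := by
  rw [meet_comm_of_nle hx hy]
  exact nle_meet_left hy hx

lemma meet_join_self (r s : α) (h : meet r s = zero) : meet (join r s) r = r := by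
  rw [meet_distrib_right, meet_idem, comm_zero h, join_zero]

lemma rcomp_nle (x y : α) : nle (rcomp x y) x := by
  have hj := rcomp_join x y
  have hm := rcomp_meet x y
  constructor
  · have h1 := absorb₁ (rcomp x y) (meet x (meet y x))
    rwa [hj] at h1
  · have h1 := meet_join_self (rcomp x y) (meet x (meet y x)) hm
    rwa [hj] at h1

lemma rcomp_meet_right (x y : α) : meet (rcomp x y) y = zero := by
  have hle := rcomp_nle x y
  have hm := rcomp_meet x y
  have h1 : meet (rcomp x y) (meet y x) = zero := by
    rw [mal hle.1] at hm; exact hm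
  have h2 : meet (rcomp x y) (meet y (rcomp x y)) = zero := by
    calc meet (rcomp x y) (meet y (rcomp x y))
        = meet (rcomp x y) (meet y (meet x (rcomp x y))) := by rw [hle.2]
      _ = meet (meet (rcomp x y) (meet y x)) (rcomp x y) := by
          rw [← meet_assoc y x, ← meet_assoc]
      _ = zero := by rw [h1, zmeet]
  apply sand_zero
  rw [meet_assoc]
  exact h2

lemma ideal_down (hI : IsIdeal P) {x y : α} (hy : y ∈ P) (h : npre x y) : x ∈ P :=
  hI.2.2 x y hy h

lemma ideal_join (hI : IsIdeal P) {x y : α} (hx : x ∈ P) (hy : y ∈ P) : join x y ∈ P :=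
  hI.2.1 x hx y hy

lemma join_mem_iff (hI : IsIdeal P) {x y : α} : join x y ∈ P ↔ x ∈ P ∧ y ∈ P :=
  ⟨fun h => ⟨ideal_down hI h (npre_join_left x y), ideal_down hI h (npre_join_right x y)⟩,
   fun h => ideal_join hI h.1 h.2⟩

lemma prime_meet (hP : IsPrimeIdeal P) {x y : α} (h : meet x y ∈ P) : x ∈ P ∨ y ∈ P :=
  hP.2.2 x y h

lemma not_mem_meet (hP : IsPrimeIdeal P) {x y : α} (hx : x ∉ P) (hy : y ∉ P) :
    meet x y ∉ P := fun h => (prime_meet hP h).elim hx hy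

lemma not_mem_of_nle (hI : IsIdeal P) {x y : α} (h : nle x y) (hx : x ∉ P) : y ∉ P :=
  fun hy => hx (ideal_down hI hy (npre_of_nle h))

lemma inter_nle_left (x y : α) : nle (inter x y) x := inter_le_left x y

lemma inter_nle_right (x y : α) : nle (inter x y) y := inter_le_right x y

lemma nle_inter {x y z : α} (h1 : nle z x) (h2 : nle z y) : nle z (inter x y) :=
  inter_glb x y z h1 h2

lemma sand_of_nle {m x : α} (h : nle m x) : meet x (meet m x) = m := by
  rw [h.1, h.2]

lemma theta_iff (hP : IsPrimeIdeal P) (x y : α) :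
    theta P x y ↔ ((x ∈ P ∧ y ∈ P) ∨ inter x y ∉ P) := by
  have hI := hP.1
  set m := inter x y with hm
  have hmx : nle m x := inter_nle_left x y
  have hmy : nle m y := inter_nle_right x y
  have hx1 : meet x (meet m x) = m := sand_of_nle hmx
  have hy1 : meet y (meet m y) = m := sand_of_nle hmy
  have hjx : join (rcomp x m) m = x := by have h := rcomp_join x m; rwa [hx1] at h
  have hjy : join (rcomp y m) m = y := by have h := rcomp_join y m; rwa [hy1] at h
  have hmxz : meet (rcomp x m) m = zero := by have h := rcomp_meet x m; rwa [hx1] at h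
  have hmyz : meet (rcomp y m) m = zero := by have h := rcomp_meet y m; rwa [hy1] at h
  have hth : theta P x y ↔ (rcomp x m ∈ P ∧ rcomp y m ∈ P) := by
    unfold theta
    rw [← hm]
    exact join_mem_iff hI
  by_cases hmP : m ∈ P
  · have hx : rcomp x m ∈ P ↔ x ∈ P := by
      constructor
      · intro h; rw [← hjx]; exact ideal_join hI h hmP
      · intro h; exact ideal_down hI h (npre_of_nle (rcomp_nle x m))
    have hy : rcomp y m ∈ P ↔ y ∈ P := by
      constructor
      · intro h; rw [← hjy]; exact ideal_join hI h hmP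
      · intro h; exact ideal_down hI h (npre_of_nle (rcomp_nle y m))
    rw [hth, hx, hy]
    constructor
    · exact Or.inl
    · rintro (h | h)
      · exact h
      · exact absurd hmP h
  · have hrx : rcomp x m ∈ P := by
      have h : meet (rcomp x m) m ∈ P := by rw [hmxz]; exact hI.1
      exact (prime_meet hP h).resolve_right hmP
    have hry : rcomp y m ∈ P := by
      have h : meet (rcomp y m) m ∈ P := by rw [hmyz]; exact hI.1
      exact (prime_meet hP h).resolve_right hmP
    rw [hth]
    exact ⟨fun _ => Or.inr hmP, fun _ => ⟨hrx, hry⟩⟩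

lemma nle_join_sand (a b : α) : nle a (join a (join b a)) := by
  constructor
  · exact absorb₁ a (join b a)
  · rw [← join_assoc]; exact absorb₂ a (join a b)

lemma npre_join_mid (a b : α) : npre b (join a (join b a)) := by
  show meet b (meet (join a (join b a)) b) = b
  rw [← meet_assoc, meet_distrib_left, meet_distrib_left, meet_idem,
      meet_distrib_right, meet_distrib_right, meet_idem,
      meet_assoc b a b, absorb₃, ← meet_assoc b a b, absorb₄]

lemma nle_join_of (a b : α) {e : α} (heb : nle e b) (hea : meet e a = zero) :
    nle e (join a (join b a)) := by
  have hae : meet a e = zero := comm_zero hea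
  constructor
  · rw [meet_distrib_left, meet_distrib_left, hea, heb.1, zero_join, join_zero]
  · rw [meet_distrib_right, meet_distrib_right, hae, heb.2, zero_join, join_zero]

lemma bprime_props (hP : IsPrimeIdeal P) {a b : α} (ha : a ∈ P) (hb : b ∉ P) :
    rcomp b a ∉ P ∧ nle (rcomp b a) (join a (join b a)) ∧ nle (rcomp b a) b := by
  have hI := hP.1
  have h1 : nle (rcomp b a) b := rcomp_nle b a
  have h2 : meet (rcomp b a) a = zero := rcomp_meet_right b a
  have h3 : meet b (meet a b) ∈ P := ideal_down hI ha (npre_sandwich b a)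
  have h4 : rcomp b a ∉ P := fun h => hb (by
    rw [← rcomp_join b a]; exact ideal_join hI h h3)
  exact ⟨h4, nle_join_of a b h1 h2, h1⟩

end Aux

section Main

variable {α : Type u} [SkewBooleanInterAlgebra α] {P : Set α}

lemma part_i (hP : IsPrimeIdeal P) (a b t : α) :
    (meet a (meet b a) ∉ P ∧ theta P t (meet a (meet b a))) ↔
      (a ∉ P ∧ b ∉ P ∧ theta P t a) := by
  have hI := hP.1
  have hca : nle (meet a (meet b a)) a := sandwich_nle a b
  have hcmem : meet a (meet b a) ∈ P ↔ (a ∈ P ∨ b ∈ P) := by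
    constructor
    · intro h
      rcases prime_meet hP h with h | h
      · exact Or.inl h
      · rcases prime_meet hP h with h | h
        · exact Or.inr h
        · exact Or.inl h
    · rintro (h | h)
      · exact ideal_down hI h (npre_of_nle hca)
      · exact ideal_down hI h (npre_sandwich a b)
  rw [theta_iff hP t (meet a (meet b a)), theta_iff hP t a]
  constructor
  · rintro ⟨hc, hth⟩
    have ha : a ∉ P := fun h => hc (hcmem.mpr (Or.inl h))
    have hb : b ∉ P := fun h => hc (hcmem.mpr (Or.inr h))
    refine ⟨ha, hb, ?_⟩
    rcases hth with ⟨_, h⟩ | h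
    · exact absurd h hc
    · exact Or.inr (not_mem_of_nle hI
        (nle_inter (inter_nle_left t _) (nle_trans (inter_nle_right t _) hca)) h)
  · rintro ⟨ha, hb, hth⟩
    have hc : meet a (meet b a) ∉ P := fun h => (hcmem.mp h).elim ha hb
    refine ⟨hc, ?_⟩
    rcases hth with ⟨_, h⟩ | h
    · exact absurd h ha
    · right
      have hdt := inter_nle_left t a
      have hda := inter_nle_right t a
      set d := inter t a with hd
      have he1 : nle (meet d (meet b d)) t := by
        constructor
        · rw [meet_assoc, meet_assoc, hdt.1]
        · rw [← meet_assoc, hdt.2]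
      have hkey : meet d (meet b d) = meet d (meet b a) := by
        calc meet d (meet b d) = meet d (meet b (meet d a)) := by rw [hda.1]
          _ = meet d (meet d (meet b a)) := norm' d b d a
          _ = meet d (meet b a) := by rw [← meet_assoc, meet_idem]
      have hec : meet (meet d (meet b d)) (meet a (meet b a)) = meet d (meet b d) := by
        rw [hkey]
        calc meet (meet d (meet b a)) (meet a (meet b a))
            = meet d (meet b (meet a (meet a (meet b a)))) := by rw [meet_assoc, meet_assoc]
          _ = meet d (meet b (meet a (meet b a))) := by rw [← meet_assoc a a, meet_idem]
          _ = meet d (meet b a) := by rw [mxyxy b a]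
      have hce : meet (meet a (meet b a)) (meet d (meet b d)) = meet d (meet b d) := by
        calc meet (meet a (meet b a)) (meet d (meet b d))
            = meet a (meet b (meet a (meet d (meet b d)))) := by rw [meet_assoc, meet_assoc]
          _ = meet a (meet b (meet d (meet b d))) := by rw [mar hda.2]
          _ = meet a (meet d (meet b (meet b d))) := norm' a b d (meet b d)
          _ = meet a (meet d (meet b d)) := by rw [← meet_assoc b b, meet_idem]
          _ = meet d (meet b d) := mar hda.2 _
      have hene : meet d (meet b d) ∉ P := by
        intro hm
        rcases prime_meet hP hm with h1 | h1
        · exact h h1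
        · rcases prime_meet hP h1 with h2 | h2
          · exact hb h2
          · exact h h2
      exact not_mem_of_nle hI (nle_inter he1 ⟨hec, hce⟩) hene

lemma part_ii (hP : IsPrimeIdeal P) (a b t : α) :
    (join a (join b a) ∉ P ∧ theta P t (join a (join b a))) ↔
      ((a ∉ P ∧ theta P t a) ∨ (a ∈ P ∧ b ∉ P ∧ theta P t b)) := by
  have hI := hP.1
  have haj : nle a (join a (join b a)) := nle_join_sand a b
  have hjmem : join a (join b a) ∈ P ↔ (a ∈ P ∧ b ∈ P) := by
    constructor
    · intro h
      exact ⟨ideal_down hI h (npre_of_nle haj), ideal_down hI h (npre_join_mid a b)⟩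
    · rintro ⟨h1, h2⟩
      exact ideal_join hI h1 (ideal_join hI h2 h1)
  rw [theta_iff hP t (join a (join b a)), theta_iff hP t a, theta_iff hP t b]
  constructor
  · rintro ⟨hj, hth⟩
    have hth' : inter t (join a (join b a)) ∉ P := by
      rcases hth with ⟨_, h⟩ | h
      · exact absurd h hj
      · exact h
    by_cases ha : a ∈ P
    · have hb : b ∉ P := fun h2 => hj (hjmem.mpr ⟨ha, h2⟩)
      right
      refine ⟨ha, hb, Or.inr ?_⟩
      obtain ⟨hb'n, hb'j, hb'b⟩ := bprime_props hP ha hb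
      have hgj : nle (inter t (join a (join b a))) (join a (join b a)) := inter_nle_right _ _
      have hgt : nle (inter t (join a (join b a))) t := inter_nle_left _ _
      have hm1 := nle_meet_left hgj hb'j
      have hm2 := nle_meet_right hgj hb'j
      have hmn : meet (inter t (join a (join b a))) (rcomp b a) ∉ P :=
        not_mem_meet hP hth' hb'n
      exact not_mem_of_nle hI
        (nle_inter (nle_trans hm1 hgt) (nle_trans hm2 hb'b)) hmn
    · left
      refine ⟨ha, Or.inr ?_⟩
      have hgj : nle (inter t (join a (join b a))) (join a (join b a)) := inter_nle_right _ _
      have hgt : nle (inter t (join a (join b a))) t := inter_nle_left _ _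
      have hm1 := nle_meet_left hgj haj
      have hm2 := nle_meet_right hgj haj
      have hmn : meet (inter t (join a (join b a))) a ∉ P := not_mem_meet hP hth' ha
      exact not_mem_of_nle hI (nle_inter (nle_trans hm1 hgt) hm2) hmn
  · rintro (⟨ha, hth⟩ | ⟨ha, hb, hth⟩)
    · have hth' : inter t a ∉ P := by
        rcases hth with ⟨_, h⟩ | h
        · exact absurd h ha
        · exact h
      have hj : join a (join b a) ∉ P := fun h2 => ha (hjmem.mp h2).1
      refine ⟨hj, Or.inr ?_⟩
      exact not_mem_of_nle hI
        (nle_inter (inter_nle_left t a) (nle_trans (inter_nle_right t a) haj)) hth'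
    · have hth' : inter t b ∉ P := by
        rcases hth with ⟨_, h⟩ | h
        · exact absurd h hb
        · exact h
      have hj : join a (join b a) ∉ P := fun h2 => hb (hjmem.mp h2).2
      refine ⟨hj, Or.inr ?_⟩
      have hdt := inter_nle_left t b
      have hdb := inter_nle_right t b
      have hednle : nle (rcomp (inter t b) a) (inter t b) := rcomp_nle _ _
      have hea : meet (rcomp (inter t b) a) a = zero := rcomp_meet_right _ _
      have hen : rcomp (inter t b) a ∉ P := by
        intro h2
        apply hth'
        have h3 : meet (inter t b) (meet a (inter t b)) ∈ P :=
          ideal_down hI ha (npre_sandwich (inter t b) a)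
        have h4 := ideal_join hI h2 h3
        rwa [rcomp_join] at h4
      have hej : nle (rcomp (inter t b) a) (join a (join b a)) :=
        nle_join_of a b (nle_trans hednle hdb) hea
      exact not_mem_of_nle hI (nle_inter (nle_trans hednle hdt) hej) hen

end Main

theorem baseM_meet_and_join {α : Type u} [SkewBooleanInterAlgebra α] :
    ∀ (a b t : α) (P : Set α), IsPrimeIdeal P →
      ((meet a (meet b a) ∉ P ∧ theta P t (meet a (meet b a))) ↔
        (a ∉ P ∧ b ∉ P ∧ theta P t a)) ∧
      ((join a (join b a) ∉ P ∧ theta P t (join a (join b a))) ↔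
        ((a ∉ P ∧ theta P t a) ∨ (a ∈ P ∧ b ∉ P ∧ theta P t b))) := by
  intro a b t P hP
  exact ⟨part_i hP a b t, part_ii hP a b t⟩
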